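/- Extended Ottaviani inequality: Let E be a sublinear expectation on the space X of bounded measurable real-valued functions on (Ω, F), with upper capacity C(A) := E(1_A) and lower capacity c(A) := −E(−1_A). Let {ξ_n}_{n≥1} ⊂ X be an independent sequence with respect to E, let n ∈ ℕ, and let r, s, t > 0 be such that c({ |Σ_{i=k+1}^{n} ξ_i| ≤ s }) ≥ r for all 0 ≤ k ≤ n−1. Set S_k := Σ_{i=1}^{k} ξ_i and A_k := { ω : max_{1≤i≤k−1} |S_i(ω)| ≤ s+t and |S_k(ω)| > s+t }. Then C({ max_{1≤k≤n} |S_k| > s+t }) ≤ C({ |S_n| > t }) + (1 − r) Σ_{k=1}^{n} C(A_k). -/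

import Mathlib

/-!
Let `k` be the first time the partial sums leave `[-(s+t), s+t]`. Either the remaining
increments `S_n - S_k` stay within `s`, and then `|S_n| > t`, or the event
`A_k ∩ {|S_n - S_k| > s}` occurs. Since `A_k` depends on `ξ_1, …, ξ_k` and `S_n - S_k` on
`ξ_{k+1}, …, ξ_n`, independence bounds its capacity by `C(A_k) C(|S_n - S_k| > s)`, and
subadditivity gives `C(|S_n - S_k| > s) ≤ 1 - c(|S_n - S_k| ≤ s) ≤ 1 - r`.
-/

open MeasureTheory Set Filter Topology Classical

/-- The space of bounded measurable real-valued functions on `Ω`, as a submodule of `Ω → ℝ`. -/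
def BM (Ω : Type*) [MeasurableSpace Ω] : Submodule ℝ (Ω → ℝ) where
  carrier := {f | Measurable f ∧ ∃ M : ℝ, ∀ ω, |f ω| ≤ M}
  zero_mem' := ⟨measurable_const, 0, by simp⟩
  add_mem' := by
    rintro f g ⟨hf, Mf, hMf⟩ ⟨hg, Mg, hMg⟩
    exact ⟨hf.add hg, Mf + Mg, fun ω => (abs_add_le _ _).trans (add_le_add (hMf ω) (hMg ω))⟩
  smul_mem' := by
    rintro c f ⟨hf, Mf, hMf⟩
    refine ⟨hf.const_smul c, |c| * Mf, fun ω => ?_⟩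
    simp only [Pi.smul_apply, smul_eq_mul, abs_mul]
    exact mul_le_mul_of_nonneg_left (hMf ω) (abs_nonneg c)

variable {Ω : Type*} [MeasurableSpace Ω]

lemma mem_BM {f : Ω → ℝ} (hf : Measurable f) (M : ℝ) (hM : ∀ ω, |f ω| ≤ M) : f ∈ BM Ω :=
  ⟨hf, M, hM⟩

lemma BM.measurable (ξ : BM Ω) : Measurable (ξ : Ω → ℝ) := ξ.2.1

lemma BM.bounded (ξ : BM Ω) : ∃ M : ℝ, ∀ ω, |(ξ : Ω → ℝ) ω| ≤ M := ξ.2.2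

/-- A sublinear expectation on the space of bounded measurable functions. -/
structure SLE (Ω : Type*) [MeasurableSpace Ω] where
  E : BM Ω → ℝ
  mono : ∀ ξ η : BM Ω, (∀ ω, (η : Ω → ℝ) ω ≤ (ξ : Ω → ℝ) ω) → E η ≤ E ξ
  const_preserve : ∀ (c : ℝ) (h : (fun _ : Ω => c) ∈ BM Ω), E ⟨fun _ => c, h⟩ = c
  subadd : ∀ ξ η : BM Ω, E (ξ + η) ≤ E ξ + E η
  pos_homog : ∀ (c : ℝ), 0 ≤ c → ∀ ξ : BM Ω, E (c • ξ) = c * E ξ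

/-- The constant function as an element of `BM Ω`. -/
def constBM (Ω : Type*) [MeasurableSpace Ω] (c : ℝ) : BM Ω :=
  ⟨fun _ => c, mem_BM measurable_const |c| fun _ => le_refl _⟩

/-- The indicator function of a measurable set as an element of `BM Ω`. -/
noncomputable def indBM {Ω : Type*} [MeasurableSpace Ω] (A : Set Ω) (hA : MeasurableSet A) : BM Ω :=
  ⟨A.indicator fun _ => 1,
    mem_BM (measurable_const.indicator hA) 1 fun ω => by
      by_cases h : ω ∈ A <;> simp [Set.indicator_apply, h]⟩

/-- The product of two bounded measurable functions. -/
noncomputable def mulBM (ξ η : BM Ω) : BM Ω := by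
  refine ⟨fun ω => (ξ : Ω → ℝ) ω * (η : Ω → ℝ) ω, ?_⟩
  obtain ⟨Mf, hMf⟩ := BM.bounded ξ
  obtain ⟨Mg, hMg⟩ := BM.bounded η
  refine mem_BM ((BM.measurable ξ).mul (BM.measurable η)) (max Mf 0 * max Mg 0) fun ω => ?_
  rw [abs_mul]
  exact mul_le_mul ((hMf ω).trans (le_max_left _ _)) ((hMg ω).trans (le_max_left _ _))
    (abs_nonneg _) (le_max_right _ _)

/-- The upper capacity associated to a sublinear expectation: `C(A) = E(1_A)` for measurable `A`
(junk value `0` on non-measurable sets). -/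
noncomputable def SLE.cap (𝔼 : SLE Ω) (A : Set Ω) : ℝ :=
  if h : MeasurableSet A then 𝔼.E (indBM A h) else 0

/-- The lower capacity associated to a sublinear expectation: `c(A) = -E(-1_A)` for measurable `A`
(junk value `0` on non-measurable sets). -/
noncomputable def SLE.lcap (𝔼 : SLE Ω) (A : Set Ω) : ℝ :=
  if h : MeasurableSet A then -𝔼.E (-(indBM A h)) else 0

/-- A linear expectation dominated by the sublinear expectation `𝔼`. -/
def Dominated (𝔼 : SLE Ω) (L : BM Ω →ₗ[ℝ] ℝ) : Prop := ∀ ξ : BM Ω, L ξ ≤ 𝔼.E ξ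

/-- `ξ` and `η` are uncorrelated with respect to `𝔼` if `L(ξη) = L(ξ)L(η)` for every
linear expectation `L` dominated by `𝔼`. -/
def Uncorrelated (𝔼 : SLE Ω) (ξ η : BM Ω) : Prop :=
  ∀ L : BM Ω →ₗ[ℝ] ℝ, Dominated 𝔼 L → L (mulBM ξ η) = L ξ * L η

/-- `𝔼` is regular: if `ξ n ↓ 0` pointwise then `𝔼.E (ξ n) ↓ 0`. -/
def SLE.Regular (𝔼 : SLE Ω) : Prop :=
  ∀ ξ : ℕ → BM Ω, (∀ ω, Antitone fun n => (ξ n : Ω → ℝ) ω) →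
    (∀ ω, Tendsto (fun n => (ξ n : Ω → ℝ) ω) atTop (𝓝 0)) →
    Tendsto (fun n => 𝔼.E (ξ n)) atTop (𝓝 0)

/-- The σ-field generated by `ξ a, …, ξ b`. -/
def sigmaGen (ξ : ℕ → BM Ω) (a b : ℕ) : MeasurableSpace Ω :=
  ⨆ i ∈ Set.Icc a b, MeasurableSpace.comap (fun ω => (ξ i : Ω → ℝ) ω) inferInstance

/-- `{ξ_n}_{n ≥ 1}` is an independent sequence under `𝔼`: pairwise uncorrelated, and
`C(A ∩ B) ≤ C(A) C(B)` whenever `A ∈ σ(ξ_1, …, ξ_m)` and `B ∈ σ(ξ_{m+1}, …, ξ_n)`, `m < n`. -/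
def IndepSeq (𝔼 : SLE Ω) (ξ : ℕ → BM Ω) : Prop :=
  (∀ i j, 1 ≤ i → 1 ≤ j → i ≠ j → Uncorrelated 𝔼 (ξ i) (ξ j)) ∧
  ∀ m n : ℕ, 1 ≤ m → m < n → ∀ A B : Set Ω,
    MeasurableSet[sigmaGen ξ 1 m] A → MeasurableSet[sigmaGen ξ (m + 1) n] B →
    𝔼.cap (A ∩ B) ≤ 𝔼.cap A * 𝔼.cap B

/-- Assumption (H₀): for every disjoint measurable cover `{A_n}` of `Ω`,
the series `Σ C(A_n)` has bounded partial sums. -/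
def H0 (𝔼 : SLE Ω) : Prop :=
  ∀ A : ℕ → Set Ω, (∀ n, MeasurableSet (A n)) → Pairwise (Function.onFun Disjoint A) →
    (⋃ n, A n) = Set.univ → ∃ M : ℝ, ∀ N : ℕ, ∑ n ∈ Finset.range N, 𝔼.cap (A n) < M

namespace SLE

variable {𝔼 : SLE Ω}

lemma E_constBM (c : ℝ) : 𝔼.E (constBM Ω c) = c := 𝔼.const_preserve c _

lemma cap_of_measurableSet {A : Set Ω} (hA : MeasurableSet A) :
    𝔼.cap A = 𝔼.E (indBM A hA) := dif_pos hA

lemma lcap_of_measurableSet {A : Set Ω} (hA : MeasurableSet A) :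
    𝔼.lcap A = -𝔼.E (-indBM A hA) := dif_pos hA

lemma cap_empty : 𝔼.cap (∅ : Set Ω) = 0 := by
  have h : indBM (∅ : Set Ω) MeasurableSet.empty = constBM Ω 0 := by
    ext ω
    simp [indBM, constBM]
  rw [cap_of_measurableSet MeasurableSet.empty, h, E_constBM]

lemma cap_mono {A B : Set Ω} (hA : MeasurableSet A) (hB : MeasurableSet B) (hAB : A ⊆ B) :
    𝔼.cap A ≤ 𝔼.cap B := by
  rw [cap_of_measurableSet hA, cap_of_measurableSet hB]
  exact 𝔼.mono _ _ fun ω => Set.indicator_le_indicator_of_subset hAB (fun _ => zero_le_one) ω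

lemma cap_nonneg {A : Set Ω} (hA : MeasurableSet A) : 0 ≤ 𝔼.cap A :=
  cap_empty (𝔼 := 𝔼) ▸ cap_mono MeasurableSet.empty hA (Set.empty_subset A)

lemma cap_union_le {A B : Set Ω} (hA : MeasurableSet A) (hB : MeasurableSet B) :
    𝔼.cap (A ∪ B) ≤ 𝔼.cap A + 𝔼.cap B := by
  rw [cap_of_measurableSet (hA.union hB), cap_of_measurableSet hA, cap_of_measurableSet hB]
  refine le_trans (𝔼.mono (indBM A hA + indBM B hB) _ fun ω => ?_) (𝔼.subadd _ _)
  by_cases h₁ : ω ∈ A <;> by_cases h₂ : ω ∈ B <;> simp [indBM, h₁, h₂]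

lemma cap_biUnion_le {ι : Type*} (s : Finset ι) {A : ι → Set Ω}
    (hA : ∀ i ∈ s, MeasurableSet (A i)) : 𝔼.cap (⋃ i ∈ s, A i) ≤ ∑ i ∈ s, 𝔼.cap (A i) := by
  induction s using Finset.induction_on with
  | empty => simp [cap_empty]
  | insert a s ha ih =>
    rw [Finset.sum_insert ha, Finset.set_biUnion_insert]
    have hs : ∀ i ∈ s, MeasurableSet (A i) := fun i hi => hA i (Finset.mem_insert_of_mem hi)
    exact (cap_union_le (hA a (Finset.mem_insert_self a s))
      (Finset.measurableSet_biUnion s hs)).trans (add_le_add_right (ih hs) _)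

lemma cap_compl_le {A : Set Ω} (hA : MeasurableSet A) : 𝔼.cap Aᶜ ≤ 1 - 𝔼.lcap A := by
  have h : indBM Aᶜ hA.compl = constBM Ω 1 + -indBM A hA := by
    ext ω
    by_cases hω : ω ∈ A <;> simp [indBM, constBM, hω]
  rw [cap_of_measurableSet hA.compl, lcap_of_measurableSet hA, h, sub_neg_eq_add]
  simpa only [E_constBM] using 𝔼.subadd (constBM Ω 1) (-indBM A hA)

lemma lcap_le_one {A : Set Ω} (hA : MeasurableSet A) : 𝔼.lcap A ≤ 1 := by
  linarith [cap_nonneg (𝔼 := 𝔼) hA.compl, cap_compl_le (𝔼 := 𝔼) hA]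

lemma cap_le_add_sum_of_subset {ι : Type*} {M D : Set Ω} (s : Finset ι) {C : ι → Set Ω}
    {g : ι → ℝ} (hM : MeasurableSet M) (hD : MeasurableSet D) (hC : ∀ i ∈ s, MeasurableSet (C i))
    (hsub : M ⊆ D ∪ ⋃ i ∈ s, C i) (hg : ∀ i ∈ s, 𝔼.cap (C i) ≤ g i) :
    𝔼.cap M ≤ 𝔼.cap D + ∑ i ∈ s, g i := by
  have hU := Finset.measurableSet_biUnion s hC
  calc 𝔼.cap M
      ≤ 𝔼.cap (D ∪ ⋃ i ∈ s, C i) := cap_mono hM (hD.union hU) hsub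
    _ ≤ 𝔼.cap D + 𝔼.cap (⋃ i ∈ s, C i) := cap_union_le hD hU
    _ ≤ 𝔼.cap D + ∑ i ∈ s, g i := by grw [cap_biUnion_le s hC, Finset.sum_le_sum hg]

end SLE

lemma measurable_sum_BM (ξ : ℕ → BM Ω) (s : Finset ℕ) :
    Measurable fun ω => ∑ i ∈ s, (ξ i : Ω → ℝ) ω :=
  Finset.measurable_sum s fun i _ => BM.measurable (ξ i)

lemma sigmaGen_le (ξ : ℕ → BM Ω) (a b : ℕ) : sigmaGen ξ a b ≤ ‹MeasurableSpace Ω› :=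
  iSup₂_le fun i _ => (BM.measurable (ξ i)).comap_le

lemma measurable_sum_sigmaGen (ξ : ℕ → BM Ω) {a b : ℕ} {s : Finset ℕ}
    (hs : ∀ i ∈ s, i ∈ Set.Icc a b) :
    Measurable[sigmaGen ξ a b] fun ω => ∑ i ∈ s, (ξ i : Ω → ℝ) ω :=
  Finset.measurable_sum s fun i hi => measurable_iff_comap_le.2 <|
    le_iSup₂ (f := fun i (_ : i ∈ Set.Icc a b) =>
      MeasurableSpace.comap (fun ω => (ξ i : Ω → ℝ) ω) inferInstance) i (hs i hi)

/-- The paper's `A_k`: the partial sums of `f` first leave `[-a, a]` at time `k`. -/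
def firstExit {α : Type*} (f : ℕ → α → ℝ) (a : ℝ) (k : ℕ) : Set α :=
  {ω | (∀ i, 1 ≤ i → i ≤ k - 1 → |∑ j ∈ Finset.Icc 1 i, f j ω| ≤ a) ∧
    a < |∑ j ∈ Finset.Icc 1 k, f j ω|}

lemma measurableSet_firstExit {α : Type*} {m : MeasurableSpace α} {f : ℕ → α → ℝ} {k : ℕ}
    (hf : ∀ i ≤ k, Measurable[m] fun ω => ∑ j ∈ Finset.Icc 1 i, f j ω) (a : ℝ) :
    MeasurableSet[m] (firstExit f a k) := by
  have hbefore : MeasurableSet[m]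
      {ω | ∀ i, 1 ≤ i → i ≤ k - 1 → |∑ j ∈ Finset.Icc 1 i, f j ω| ≤ a} := by
    simp only [Set.ofPred_forall]
    exact .iInter fun i => .iInter fun _ => .iInter fun hi =>
      measurableSet_le (hf i (by omega)).abs measurable_const
  exact hbefore.inter (measurableSet_lt measurable_const (hf k le_rfl).abs)

lemma exists_mem_firstExit {α : Type*} {f : ℕ → α → ℝ} {a : ℝ} {n : ℕ} {ω : α}
    (h : ∃ k, 1 ≤ k ∧ k ≤ n ∧ a < |∑ i ∈ Finset.Icc 1 k, f i ω|) :
    ∃ k ∈ Finset.Icc 1 n, ω ∈ firstExit f a k := by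
  obtain ⟨hk₁, hkn, hk⟩ := Nat.find_spec h
  refine ⟨Nat.find h, Finset.mem_Icc.2 ⟨hk₁, hkn⟩, fun i hi₁ hik => ?_, hk⟩
  by_contra! hi
  exact Nat.find_min h (by omega : i < Nat.find h) ⟨hi₁, by omega, hi⟩

lemma sum_Icc_one_add_sum_Icc_succ {M : Type*} [AddCommMonoid M] (f : ℕ → M) {k n : ℕ}
    (hkn : k ≤ n) :
    ∑ i ∈ Finset.Icc 1 k, f i + ∑ i ∈ Finset.Icc (k + 1) n, f i = ∑ i ∈ Finset.Icc 1 n, f i := by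
  have hIcc : ∀ m, Finset.Icc 1 m = Finset.Ioc 0 m := Finset.Icc_add_one_left_eq_Ioc 0
  rw [hIcc, hIcc, Finset.Icc_add_one_left_eq_Ioc]
  exact Finset.sum_Ioc_consecutive f (Nat.zero_le k) hkn

lemma subset_union_firstExit_inter {α : Type*} (f : ℕ → α → ℝ) (n : ℕ) (s t : ℝ) :
    {ω | ∃ k, 1 ≤ k ∧ k ≤ n ∧ s + t < |∑ i ∈ Finset.Icc 1 k, f i ω|} ⊆
      {ω | t < |∑ i ∈ Finset.Icc 1 n, f i ω|} ∪
        ⋃ k ∈ Finset.Icc 1 n,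
          firstExit f (s + t) k ∩ {ω | s < |∑ i ∈ Finset.Icc (k + 1) n, f i ω|} := by
  intro ω hω
  obtain ⟨k, hk, hexit⟩ := exists_mem_firstExit hω
  by_cases htail : s < |∑ i ∈ Finset.Icc (k + 1) n, f i ω|
  · exact Or.inr (Set.mem_biUnion hk ⟨hexit, htail⟩)
  · left
    have hsplit := sum_Icc_one_add_sum_Icc_succ (f · ω) (Finset.mem_Icc.1 hk).2
    have htri : |∑ i ∈ Finset.Icc 1 k, f i ω| ≤
        |∑ i ∈ Finset.Icc 1 n, f i ω| + |∑ i ∈ Finset.Icc (k + 1) n, f i ω| := by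
      rw [eq_sub_of_add_eq hsplit]
      exact abs_sub _ _
    show t < |∑ i ∈ Finset.Icc 1 n, f i ω|
    linarith [hexit.2]

namespace IndepSeq

variable {𝔼 : SLE Ω} {ξ : ℕ → BM Ω}

lemma cap_inter_tail_le (hind : IndepSeq 𝔼 ξ) {m n : ℕ} (hm : 1 ≤ m) (hmn : m < n) {A : Set Ω}
    (hA : MeasurableSet[sigmaGen ξ 1 m] A) (s : ℝ) :
    𝔼.cap (A ∩ {ω | s < |∑ i ∈ Finset.Icc (m + 1) n, (ξ i : Ω → ℝ) ω|}) ≤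
      (1 - 𝔼.lcap {ω | |∑ i ∈ Finset.Icc (m + 1) n, (ξ i : Ω → ℝ) ω| ≤ s}) * 𝔼.cap A := by
  have htail := measurable_sum_sigmaGen ξ (a := m + 1) (b := n) (s := Finset.Icc (m + 1) n)
    fun i hi => Finset.mem_Icc.1 hi
  have hB : MeasurableSet[sigmaGen ξ (m + 1) n]
      {ω | s < |∑ i ∈ Finset.Icc (m + 1) n, (ξ i : Ω → ℝ) ω|} :=
    (measurable_abs.comp htail) measurableSet_Ioi
  have hBc : {ω | s < |∑ i ∈ Finset.Icc (m + 1) n, (ξ i : Ω → ℝ) ω|} =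
      {ω | |∑ i ∈ Finset.Icc (m + 1) n, (ξ i : Ω → ℝ) ω| ≤ s}ᶜ := by
    ext ω
    simp
  calc _ ≤ 𝔼.cap A * 𝔼.cap {ω | s < |∑ i ∈ Finset.Icc (m + 1) n, (ξ i : Ω → ℝ) ω|} :=
        hind.2 m n hm hmn A _ hA hB
    _ ≤ 𝔼.cap A * (1 - 𝔼.lcap {ω | |∑ i ∈ Finset.Icc (m + 1) n, (ξ i : Ω → ℝ) ω| ≤ s}) := by
        refine mul_le_mul_of_nonneg_left ?_ (SLE.cap_nonneg (sigmaGen_le ξ 1 m A hA))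
        rw [hBc]
        exact SLE.cap_compl_le ((htail.mono (sigmaGen_le ξ _ _) le_rfl).abs measurableSet_Iic)
    _ = _ := mul_comm _ _

lemma cap_inter_tail_le_of_le_lcap (hind : IndepSeq 𝔼 ξ) {n : ℕ} {r s : ℝ} (hs : 0 ≤ s)
    (hc : ∀ k, k < n →
      r ≤ 𝔼.lcap {ω | |∑ i ∈ Finset.Icc (k + 1) n, (ξ i : Ω → ℝ) ω| ≤ s})
    {k : ℕ} (hk : k ∈ Finset.Icc 1 n) {A : Set Ω} (hA : MeasurableSet[sigmaGen ξ 1 k] A) :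
    𝔼.cap (A ∩ {ω | s < |∑ i ∈ Finset.Icc (k + 1) n, (ξ i : Ω → ℝ) ω|}) ≤ (1 - r) * 𝔼.cap A := by
  obtain ⟨hk₁, hkn⟩ := Finset.mem_Icc.1 hk
  have hA_nonneg := SLE.cap_nonneg (𝔼 := 𝔼) (sigmaGen_le ξ 1 k A hA)
  rcases hkn.lt_or_eq with hkn | rfl
  · exact (hind.cap_inter_tail_le hk₁ hkn hA s).trans
      (mul_le_mul_of_nonneg_right (sub_le_sub_left (hc k hkn) 1) hA_nonneg)
  · have hr : r ≤ 1 := (hc 0 (by omega)).trans <| SLE.lcap_le_one <|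
      measurableSet_le (measurable_sum_BM ξ _).abs measurable_const
    have hempty : A ∩ {ω | s < |∑ i ∈ Finset.Icc (k + 1) k, (ξ i : Ω → ℝ) ω|} = ∅ := by
      simp [not_lt.2 hs]
    rw [hempty, SLE.cap_empty]
    exact mul_nonneg (sub_nonneg.2 hr) hA_nonneg

end IndepSeq

theorem extended_ottaviani_general (𝔼 : SLE Ω) (ξ : ℕ → BM Ω) (hind : IndepSeq 𝔼 ξ)
    (n : ℕ) (r s t : ℝ) (hs : 0 < s)
    (hc : ∀ k, k < n →
      r ≤ 𝔼.lcap {ω | |∑ i ∈ Finset.Icc (k + 1) n, (ξ i : Ω → ℝ) ω| ≤ s}) :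
    𝔼.cap {ω | ∃ k, 1 ≤ k ∧ k ≤ n ∧ s + t < |∑ i ∈ Finset.Icc 1 k, (ξ i : Ω → ℝ) ω|} ≤
      𝔼.cap {ω | t < |∑ i ∈ Finset.Icc 1 n, (ξ i : Ω → ℝ) ω|} +
        (1 - r) * ∑ k ∈ Finset.Icc 1 n,
          𝔼.cap {ω |
            (∀ i, 1 ≤ i → i ≤ k - 1 → |∑ m ∈ Finset.Icc 1 i, (ξ m : Ω → ℝ) ω| ≤ s + t) ∧
            s + t < |∑ m ∈ Finset.Icc 1 k, (ξ m : Ω → ℝ) ω|} := by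
  have hpartial : ∀ k, ∀ i ≤ k, Measurable[sigmaGen ξ 1 k]
      fun ω => ∑ j ∈ Finset.Icc 1 i, (ξ j : Ω → ℝ) ω := fun k i hik =>
    measurable_sum_sigmaGen ξ fun j hj =>
      ⟨(Finset.mem_Icc.1 hj).1, (Finset.mem_Icc.1 hj).2.trans hik⟩
  have hexit : ∀ k, MeasurableSet[sigmaGen ξ 1 k] (firstExit (fun i => (ξ i : Ω → ℝ)) (s + t) k) :=
    fun k => measurableSet_firstExit (hpartial k) _
  have hgt : ∀ (I : Finset ℕ) (a : ℝ), MeasurableSet {ω | a < |∑ i ∈ I, (ξ i : Ω → ℝ) ω|} :=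
    fun I a => measurableSet_lt measurable_const (measurable_sum_BM ξ I).abs
  have hexceed : MeasurableSet
      {ω | ∃ k, 1 ≤ k ∧ k ≤ n ∧ s + t < |∑ i ∈ Finset.Icc 1 k, (ξ i : Ω → ℝ) ω|} :=
    measurableSet_setOfPred.2 <| .exists fun k => measurable_const.and <| measurable_const.and <|
      measurableSet_setOfPred.1 (hgt _ _)
  rw [Finset.mul_sum]
  exact SLE.cap_le_add_sum_of_subset _ hexceed (hgt _ _)
    (fun k _ => (sigmaGen_le ξ 1 k _ (hexit k)).inter (hgt _ _))
    (subset_union_firstExit_inter (fun i => (ξ i : Ω → ℝ)) n s t)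
    fun k hk => hind.cap_inter_tail_le_of_le_lcap hs.le hc hk (hexit k)

/-- Extended Ottaviani inequality for independent sequences under a sublinear
expectation. -/
theorem extended_ottaviani (𝔼 : SLE Ω) (ξ : ℕ → BM Ω) (hind : IndepSeq 𝔼 ξ)
    (n : ℕ) (hn : 1 ≤ n) (r s t : ℝ) (hr : 0 < r) (hs : 0 < s) (ht : 0 < t)
    (hc : ∀ k, k < n →
      r ≤ 𝔼.lcap {ω | |∑ i ∈ Finset.Icc (k + 1) n, (ξ i : Ω → ℝ) ω| ≤ s}) :
    𝔼.cap {ω | ∃ k, 1 ≤ k ∧ k ≤ n ∧ s + t < |∑ i ∈ Finset.Icc 1 k, (ξ i : Ω → ℝ) ω|} ≤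
      𝔼.cap {ω | t < |∑ i ∈ Finset.Icc 1 n, (ξ i : Ω → ℝ) ω|} +
        (1 - r) * ∑ k ∈ Finset.Icc 1 n,
          𝔼.cap {ω |
            (∀ i, 1 ≤ i → i ≤ k - 1 → |∑ m ∈ Finset.Icc 1 i, (ξ m : Ω → ℝ) ω| ≤ s + t) ∧
            s + t < |∑ m ∈ Finset.Icc 1 k, (ξ m : Ω → ℝ) ω|} :=
  extended_ottaviani_general 𝔼 ξ hind n r s t hs hc
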